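/- arXiv:2402.17105 — 5 statements merged into one kernel-verified Lean document; each statement's English description precedes it below -/
import Mathlib

section
/- If w = uv is a k-uniform word (each letter occurs exactly k times) representing a graph G, then the word w' = vu also represents G. -/
open SimpleGraph

variable {V : Type*}

/-- Two distinct letters `x` and `y` alternate in a word `w` if the subsequence of `w`
consisting of all occurrences of `x` and `y` is strictly alternating. -/
def Alternates [DecidableEq V] (x y : V) (w : List V) : Prop :=
  (w.filter (fun z => decide (z = x ∨ z = y))).Chain' (· ≠ ·)

/-- A word `w` represents the graph `G` if it contains every vertex at least once and
two distinct vertices are adjacent iff they alternate in `w`. -/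
def Represents [DecidableEq V] (G : SimpleGraph V) (w : List V) : Prop :=
  (∀ v : V, v ∈ w) ∧ ∀ x y : V, x ≠ y → (G.Adj x y ↔ Alternates x y w)

/-- A graph is word-representable if some word represents it. -/
def WordRepresentable [DecidableEq V] (G : SimpleGraph V) : Prop :=
  ∃ w : List V, Represents G w

/-- `l(G)`: the minimum length of a word-representant of `G`. -/
noncomputable def reprLen [DecidableEq V] (G : SimpleGraph V) : ℕ :=
  sInf {n | ∃ w : List V, Represents G w ∧ w.length = n}


lemma keyLem [DecidableEq V] {x y : V} (hxy : x ≠ y) :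
    ∀ (l : List V), l.Chain' (· ≠ ·) → (∀ z ∈ l, z = x ∨ z = y) →
      l.count x = l.count y → l ≠ [] → l.head? ≠ l.getLast?
  | [] => by simp
  | [c] => by
      intro _ hz hc _
      rcases hz c (by simp) with rfl | rfl <;> simp_all [List.count_cons]
  | c :: d :: t => by
      intro hch hz hc _
      have hcd : c ≠ d := hch.rel_head
      have hct : (d :: t).Chain' (· ≠ ·) := hch.tail
      have hcx := hz c (by simp)
      have hdx := hz d (by simp)
      have hcount : t.count x = t.count y := by
        rcases hcx with rfl | rfl
        · have hd : d = y := by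
            rcases hdx with h | h
            · exact absurd h.symm hcd
            · exact h
          subst hd
          simp [List.count_cons, hxy, hxy.symm] at hc
          omega
        · have hd : d = x := by
            rcases hdx with h | h
            · exact h
            · exact absurd h.symm hcd
          subst hd
          simp [List.count_cons, hxy, hxy.symm] at hc
          omega
      rcases t with _ | ⟨e, t'⟩
      · simpa using hcd
      · have ht : (e :: t').Chain' (· ≠ ·) := hct.tail
        have hde : d ≠ e := hct.rel_head
        have ih := keyLem hxy (e :: t') ht (fun z hzz => hz z (by simp [hzz]))
          hcount (by simp)
        have hex := hz e (by simp)
        have hec : e = c := by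
          rcases hcx with rfl | rfl <;> rcases hdx with h | h <;>
            rcases hex with h2 | h2 <;> simp_all
        have hlast : (c :: d :: e :: t').getLast? = (e :: t').getLast? := by
          simp [List.getLast?]
        rw [hlast]
        simpa [hec] using ih

lemma swapChain [DecidableEq V] {x y : V} (hxy : x ≠ y) (a b : List V)
    (hall : ∀ z ∈ a ++ b, z = x ∨ z = y)
    (hcount : (a ++ b).count x = (a ++ b).count y)
    (h : (a ++ b).Chain' (· ≠ ·)) : (b ++ a).Chain' (· ≠ ·) := by
  obtain ⟨ha, hb, -⟩ := List.isChain_append.1 h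
  refine List.isChain_append.2 ⟨hb, ha, ?_⟩
  intro p hp q hq
  rcases eq_or_ne a [] with rfl | hane
  · simp at hq
  rcases eq_or_ne b [] with rfl | hbne
  · simp at hp
  have hkey := keyLem hxy (a ++ b) h hall hcount (by simp [hane])
  have h1 : (a ++ b).head? = some q := by
    rw [List.head?_append_of_ne_nil _ hane]; exact hq
  have h2 : (a ++ b).getLast? = some p := by
    rw [List.getLast?_append_of_ne_nil _ hbne]; exact hp
  intro hpq
  exact hkey (by rw [h1, h2, hpq])

lemma altSwap [DecidableEq V] {x y : V} (hxy : x ≠ y) (u v : List V) (k : ℕ)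
    (huniform : ∀ a : V, (u ++ v).count a = k)
    (h : Alternates x y (u ++ v)) : Alternates x y (v ++ u) := by
  unfold Alternates at h ⊢
  rw [List.filter_append] at h ⊢
  set p : V → Bool := fun z => decide (z = x ∨ z = y) with hp
  refine swapChain hxy _ _ ?_ ?_ h
  · intro z hz
    rw [← List.filter_append] at hz
    have := List.of_mem_filter hz
    simpa [hp] using this
  · rw [← List.filter_append]
    have hx : ((u ++ v).filter p).count x = k := by
      rw [List.count_filter (by simp [hp])]; exact huniform x
    have hy : ((u ++ v).filter p).count y = k := by
      rw [List.count_filter (by simp [hp])]; exact huniform y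
    rw [hx, hy]

theorem stmt1 [DecidableEq V] (G : SimpleGraph V) (u v : List V) (k : ℕ)
    (huniform : ∀ a : V, (u ++ v).count a = k)
    (hrep : Represents G (u ++ v)) : Represents G (v ++ u) := by
  obtain ⟨hmem, hadj⟩ := hrep
  constructor
  · intro z
    have := hmem z
    simp only [List.mem_append] at this ⊢
    exact this.symm
  · intro x y hxy
    rw [hadj x y hxy]
    have huniform' : ∀ a : V, (v ++ u).count a = k := by
      intro a
      rw [← huniform a]
      simp [List.count_append, Nat.add_comm]
    constructor
    · exact altSwap hxy u v k huniform
    · exact altSwap hxy v u k huniform'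
end

section
/- If a word w represents a graph G, then π(w)w also represents G, where π(w) is the initial permutation of w. -/
open SimpleGraph

variable {V : Type*}

/-- The initial permutation `π(w)`: keep only the leftmost occurrence of each letter. -/
def initPerm [DecidableEq V] (w : List V) : List V := w.reverse.dedup.reverse

/-!
Restricting to two distinct letters `x, y` commutes with taking the initial permutation, so the
restriction of `π(w) w` is `π(u) u`, where `u` is the restriction of `w`. If `x` and `y`
alternate in `w`, then `u = a b a b …` with `{a, b} = {x, y}`, so `π(u) = a b` and `π(u) u`
still alternates. Conversely `u` is a suffix of `π(u) u`, and a suffix of an alternating word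
alternates.
-/

section

variable [DecidableEq V]

theorem List.filter_dedup (p : V → Bool) (l : List V) :
    l.dedup.filter p = (l.filter p).dedup := by
  induction l with
  | nil => simp
  | cons a l ih =>
    by_cases ha : a ∈ l <;> by_cases hp : p a <;>
      simp [List.dedup_cons_of_mem, List.dedup_cons_of_notMem, ha, hp, ih]

theorem initPerm_filter (p : V → Bool) (w : List V) :
    (initPerm w).filter p = initPerm (w.filter p) := by
  simp only [initPerm, List.filter_reverse, List.filter_dedup]

theorem initPerm_append_of_subset {l r : List V} (h : r ⊆ l) :
    initPerm (l ++ r) = initPerm l := by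
  rw [initPerm, List.reverse_append, List.Subset.dedup_append_right, initPerm]
  exact fun z hz => List.mem_reverse.mpr (h (List.mem_reverse.mp hz))

theorem isChain_initPerm_append_self {x y : V} {l : List V} (hxy : x ≠ y) (hx : x ∈ l)
    (hy : y ∈ l) (hl : ∀ z ∈ l, z = x ∨ z = y) (hc : l.IsChain (· ≠ ·)) :
    (initPerm l ++ l).IsChain (· ≠ ·) := by
  obtain ⟨a, b, t, rfl⟩ : ∃ a b t, l = a :: b :: t := by
    match l, hx, hy with
    | [_], hx, hy =>
      exact absurd ((List.mem_singleton.mp hx).trans (List.mem_singleton.mp hy).symm) hxy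
    | a :: b :: t, _, _ => exact ⟨a, b, t, rfl⟩
  have hab : a ≠ b := (List.isChain_cons_cons.mp hc).1
  have ht : t ⊆ [a, b] := fun z hz => by
    rcases hl a (by simp) with rfl | rfl <;> rcases hl b (by simp) with rfl | rfl <;>
      rcases hl z (by simp [hz]) with rfl | rfl <;> simp_all
  have hπ : initPerm (a :: b :: t) = [a, b] := by
    rw [show a :: b :: t = [a, b] ++ t from rfl, initPerm_append_of_subset ht]
    simp [initPerm, List.dedup_cons_of_notMem, hab.symm]
  rw [hπ]
  exact List.isChain_cons_cons.mpr ⟨hab, List.isChain_cons_cons.mpr ⟨hab.symm, hc⟩⟩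

theorem alternates_initPerm_append_iff {x y : V} {w : List V} (hxy : x ≠ y) (hx : x ∈ w)
    (hy : y ∈ w) : Alternates x y (initPerm w ++ w) ↔ Alternates x y w := by
  unfold Alternates
  rw [List.filter_append, initPerm_filter]
  refine ⟨List.IsChain.right_of_append, isChain_initPerm_append_self hxy ?_ ?_ ?_⟩
  · exact List.mem_filter.mpr ⟨hx, by simp⟩
  · exact List.mem_filter.mpr ⟨hy, by simp⟩
  · intro z hz
    simpa using (List.mem_filter.mp hz).2

end

theorem stmt3 [DecidableEq V] (G : SimpleGraph V) (w : List V)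
    (hrep : Represents G w) : Represents G (initPerm w ++ w) := by
  obtain ⟨hmem, hadj⟩ := hrep
  refine ⟨fun v => List.mem_append_right _ (hmem v), fun x y hxy => ?_⟩
  rw [hadj x y hxy, alternates_initPerm_append_iff hxy (hmem x) (hmem y)]
end

section
/- Let w be a minimum length word-representant of a word-representable graph G. Then the number of letters occurring exactly once in w is at most the size of a maximum clique of G. -/
open SimpleGraph

variable {V : Type*}

/-! If `x` and `y` each occur once in `w`, then the subword of `w` on `{x, y}` is `xy` or `yx`,
which alternates. Hence in a word-representant the letters occurring once form a clique. -/

theorem alternates_of_count_eq_one [DecidableEq V] {x y : V} {w : List V}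
    (hx : w.count x = 1) (hy : w.count y = 1) : Alternates x y w := by
  have hnodup : (w.filter fun z => decide (z = x ∨ z = y)).Nodup := by
    refine List.nodup_iff_count_le_one.2 fun a => ?_
    by_cases ha : a = x ∨ a = y
    · rw [List.count_filter (by simpa using ha)]
      rcases ha with rfl | rfl <;> simp [*]
    · have hmem : a ∉ w.filter fun z => decide (z = x ∨ z = y) := by simp [ha]
      rw [List.count_eq_zero_of_not_mem hmem]
      exact Nat.zero_le 1
  exact List.Pairwise.isChain hnodup

theorem Represents.isClique_filter_count_eq_one [Fintype V] [DecidableEq V]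
    {G : SimpleGraph V} {w : List V} (hrep : Represents G w) :
    G.IsClique ((Finset.univ.filter fun v : V => w.count v = 1 : Finset V) : Set V) := by
  intro x hx y hy hxy
  simp only [Finset.coe_filter, Finset.mem_univ, true_and, Set.mem_ofPred_eq] at hx hy
  exact (hrep.2 x y hxy).2 (alternates_of_count_eq_one hx hy)

theorem stmt8_general [Fintype V] [DecidableEq V] (G : SimpleGraph V) (w : List V)
    (hrep : Represents G w) :
    (Finset.univ.filter fun v : V => w.count v = 1).card ≤ G.cliqueNum :=
  IsClique.card_le_cliqueNum (tc := hrep.isClique_filter_count_eq_one)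

theorem stmt8 [Fintype V] [DecidableEq V] (G : SimpleGraph V) (w : List V)
    (hrep : Represents G w)
    (hmin : ∀ w' : List V, Represents G w' → w.length ≤ w'.length) :
    (Finset.univ.filter fun v : V => w.count v = 1).card ≤ G.cliqueNum :=
  stmt8_general G w hrep
end

section
/- Let w be a minimum length word-representant of a connected word-representable graph G. Then O_max(w) − O_min(w) ≤ diam(G), where O_max(w) and O_min(w) are the maximum and minimum numbers of occurrences of a letter in w, and diam(G) is the diameter of G. -/
open SimpleGraph

variable {V : Type*}

/-! The endpoints of an edge alternate in `w`, so their numbers of occurrences differ by at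
most one; along a shortest path between a most and a least frequent letter the number of
occurrences therefore drops by at most one per edge, and the path has at most `diam G` edges. -/

theorem List.count_le_count_add_one_of_isChain_ne {α : Type*} [DecidableEq α] {x y : α} :
    ∀ {l : List α}, l.IsChain (· ≠ ·) → (∀ z ∈ l, z = x ∨ z = y) →
      l.count x ≤ l.count y + 1
  | [], _, _ => by simp
  | [_], _, _ => (List.count_le_length ..).trans (by simp)
  | a :: b :: t, hc, hl => by
    obtain ⟨hab, hbt⟩ := List.isChain_cons_cons.mp hc
    have ih := count_le_count_add_one_of_isChain_ne (l := t) hbt.tail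
      fun z hz => hl z (by simp [hz])
    -- `a ≠ b` forces `{a, b} = {x, y}`, so the first two letters add one to both counts.
    rcases hl a (by simp) with rfl | rfl <;> rcases hl b (by simp) with rfl | rfl <;>
      simp only [List.count_cons] <;> grind

theorem Alternates.count_le_count_add_one [DecidableEq V] {x y : V} {w : List V}
    (h : Alternates x y w) : w.count x ≤ w.count y + 1 := by
  have hcount : ∀ v, v = x ∨ v = y →
      (w.filter fun z => decide (z = x ∨ z = y)).count v = w.count v := by
    rintro v hv
    rw [List.count_filter]
    simpa using hv
  have hle := List.count_le_count_add_one_of_isChain_ne (x := x) (y := y) h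
    fun z hz => by simpa using List.of_mem_filter hz
  rwa [hcount x (.inl rfl), hcount y (.inr rfl)] at hle

theorem Represents.count_le_count_add_length [DecidableEq V] {G : SimpleGraph V} {w : List V}
    (hrep : Represents G w) {u v : V} (p : G.Walk u v) :
    w.count u ≤ w.count v + p.length := by
  induction p with
  | nil => simp
  | cons h p ih =>
    have := ((hrep.2 _ _ h.ne).mp h).count_le_count_add_one
    rw [Walk.length_cons]
    omega

theorem stmt9_general [Fintype V] [Nonempty V] [DecidableEq V] (G : SimpleGraph V)
    (hconn : G.Connected)
    (w : List V) (hrep : Represents G w) :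
    Finset.univ.sup' Finset.univ_nonempty (fun v : V => w.count v) -
      Finset.univ.inf' Finset.univ_nonempty (fun v : V => w.count v) ≤ G.diam := by
  obtain ⟨a, -, ha⟩ := Finset.exists_mem_eq_sup' Finset.univ_nonempty fun v : V => w.count v
  obtain ⟨b, -, hb⟩ := Finset.exists_mem_eq_inf' Finset.univ_nonempty fun v : V => w.count v
  obtain ⟨p, hp⟩ := hconn.exists_walk_length_eq_dist a b
  have hwalk := hrep.count_le_count_add_length p
  have hdiam : G.dist a b ≤ G.diam := dist_le_diam (connected_iff_ediam_ne_top.mp hconn)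
  rw [ha, hb]
  omega

theorem stmt9 [Fintype V] [Nonempty V] [DecidableEq V] (G : SimpleGraph V)
    (hconn : G.Connected)
    (w : List V) (hrep : Represents G w)
    (hmin : ∀ w' : List V, Represents G w' → w.length ≤ w'.length) :
    Finset.univ.sup' Finset.univ_nonempty (fun v : V => w.count v) -
      Finset.univ.inf' Finset.univ_nonempty (fun v : V => w.count v) ≤ G.diam :=
  stmt9_general G hconn w hrep
end

section
/- Let G be a word-representable graph on m vertices with minimum word-representant length l(G), and let w_G be a minimum length word-representant with initial permutation π(w_G) = u₁u₂...u_m. With K₂ on vertices {1,2} and w_{K₂} = 12, the word w' = (u₂²u₂¹u₃²u₃¹...u_m²u_m¹)(u₁²u₂²...u_m²) g^{12}(w_G) represents the Cartesian product G □ K₂, where g^{12}(w_G) replaces each letter u of w_G by u¹u² and u^i denotes the vertex (u,i) of G □ K₂. -/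
/-!
Encode `u¹, u²` as `(u, 0), (u, 1)`, so that `w' = A B C` with `A = (u₂, 1)(u₂, 0)⋯(u_m, 1)(u_m, 0)`,
`B = (u₁, 1)⋯(u_m, 1)` and `C` the doubled `w_G`. Each pair of vertices of `G □ K₂` is read off
a subsequence of `w'` that is an injective relabelling of a word over `V` or over `Fin 2`:

* the copies of `u` give `1 (0 1)^k`, which alternates;
* layer `0` gives `π(w_G).tail · w_G` and layer `1` gives `π(w_G).tail · π(w_G) · w_G`. On `{u, v}`,
  `π(w_G)` reads `a b` where `a` is the first of `u, v` in `w_G`, so the prefix is an alternating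
  word ending in `b` and alternation of `u, v` is exactly that in `w_G`;
* `(u, 0)` and `(v, 1)` give `π(w_G).tail · v · w_G` on `{u, v}`, where the letter `v` is
  repeated: it either ends `π(w_G).tail` or starts `w_G`.
-/

open SimpleGraph

variable {V : Type*}

variable {α β : Type*}

namespace List

theorem flatMap_eq_flatMap_filter {l : List α} {f g : α → List β} {p : α → Prop}
    [DecidablePred p] (h : ∀ a, f a = if p a then g a else []) :
    l.flatMap f = (l.filter p).flatMap g := by
  induction l with
  | nil => rfl
  | cons a l ih => by_cases hp : p a <;> simp [h a, hp, ih]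

theorem isChain_ne_cons_flatMap_const_pair {x y : α} (hxy : x ≠ y) (l : List β) :
    (x :: l.flatMap fun _ => [y, x]).IsChain (· ≠ ·) := by
  induction l with
  | nil => simp
  | cons _ l ih => simpa [hxy, hxy.symm] using ih

theorem isChain_ne_flatMap_const_pair_append_cons {x y : α} (hxy : x ≠ y) (l₁ l₂ : List β) :
    ((l₁.flatMap fun _ => [x, y]) ++ x :: l₂.flatMap fun _ => [y, x]).IsChain (· ≠ ·) := by
  have h : (l₁.flatMap fun _ => [x, y]) ++ x :: l₂.flatMap (fun _ => [y, x]) =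
      x :: (l₁ ++ l₂).flatMap fun _ => [y, x] := by
    induction l₁ <;> simp_all
  rw [h]
  exact isChain_ne_cons_flatMap_const_pair hxy _

theorem filter_tail_eq_filter_or_tail (q : α → Bool) (l : List α) :
    l.tail.filter q = l.filter q ∨ l.tail.filter q = (l.filter q).tail := by
  cases l with
  | nil => simp
  | cons a l => by_cases h : q a <;> simp [h]

end List

section Alternates

variable [DecidableEq α] [DecidableEq β]

theorem alternates_iff {x y : α} {l : List α} :
    Alternates x y l ↔ (l.filter fun z => decide (z = x ∨ z = y)).IsChain (· ≠ ·) := Iff.rfl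

theorem alternates_comm {x y : α} {l : List α} : Alternates x y l ↔ Alternates y x l := by
  simp only [Alternates, or_comm]

theorem alternates_filter_iff {p : α → Bool} {x y : α} (hx : p x) (hy : p y) (l : List α) :
    Alternates x y (l.filter p) ↔ Alternates x y l := by
  have hp (z : α) : (decide (z = x ∨ z = y) && p z) = decide (z = x ∨ z = y) := by
    by_cases h : z = x ∨ z = y
    · rcases h with rfl | rfl <;> simp [hx, hy]
    · simp [h]
  simp only [Alternates, List.filter_filter, hp]

theorem alternates_map_iff {f : α → β} (hf : Function.Injective f) {x y : α} (l : List α) :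
    Alternates (f x) (f y) (l.map f) ↔ Alternates x y l := by
  simp only [alternates_iff, List.filter_map, Function.comp_def, hf.eq_iff]
  exact (List.isChain_map f).trans (by simp only [hf.ne_iff])

theorem alternates_zero_one_iff (l : List (Fin 2)) :
    Alternates 0 1 l ↔ l.IsChain (· ≠ ·) := by
  rw [alternates_iff, List.filter_eq_self.2 fun z _ => by fin_cases z <;> simp]

end Alternates

section InitialPermutation

variable [DecidableEq α]

def initialPermutation (w : List α) : List α := w.reverse.dedup.reverse

theorem nodup_initialPermutation (w : List α) : (initialPermutation w).Nodup :=
  List.nodup_reverse.2 (List.nodup_dedup _)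

@[simp] theorem mem_initialPermutation {w : List α} {a : α} :
    a ∈ initialPermutation w ↔ a ∈ w := by
  simp [initialPermutation]

theorem initialPermutation_append_singleton (w : List α) (a : α) :
    initialPermutation (w ++ [a]) =
      if a ∈ w then initialPermutation w else initialPermutation w ++ [a] := by
  by_cases ha : a ∈ w
  · simp [initialPermutation, ha, List.dedup_cons_of_mem]
  · simp [initialPermutation, ha, List.dedup_cons_of_notMem]

theorem head?_filter_initialPermutation (q : α → Bool) (w : List α) :
    ((initialPermutation w).filter q).head? = (w.filter q).head? := by
  induction w using List.reverseRecOn with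
  | nil => rfl
  | append_singleton w a ih =>
    rw [initialPermutation_append_singleton]
    split_ifs with ha
    · rw [List.filter_append, List.head?_append, ← ih]
      cases h : ((initialPermutation w).filter q).head? with
      | some => rfl
      | none =>
        rw [ih, List.head?_eq_none_iff, List.filter_eq_nil_iff] at h
        simp [h a ha]
    · simp [List.filter_append, List.head?_append, ih]

theorem exists_filter_initialPermutation_eq_pair {w : List α} {u v : α} (huv : u ≠ v)
    (hu : u ∈ w) (hv : v ∈ w) :
    ∃ a b t, a ≠ b ∧ (v = a ∨ v = b) ∧
      w.filter (fun z => decide (z = u ∨ z = v)) = a :: t ∧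
      (initialPermutation w).filter (fun z => decide (z = u ∨ z = v)) = [a, b] ∧
      ((initialPermutation w).tail.filter (fun z => decide (z = u ∨ z = v)) = [a, b] ∨
        (initialPermutation w).tail.filter (fun z => decide (z = u ∨ z = v)) = [b]) := by
  set q : α → Bool := fun z => decide (z = u ∨ z = v)
  have hperm : ((initialPermutation w).filter q).Perm [u, v] :=
    (List.perm_ext_iff_of_nodup ((nodup_initialPermutation w).filter q) (by simp [huv])).2
      fun z => by simpa [q] using fun h : z = u ∨ z = v => h.elim (· ▸ hu) (· ▸ hv)
  have hpair :
      ∃ a b, a ≠ b ∧ (v = a ∨ v = b) ∧ (initialPermutation w).filter q = [a, b] := by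
    rcases List.perm_pair.1 hperm with h | h
    · exact ⟨u, v, huv, .inr rfl, h⟩
    · exact ⟨v, u, huv.symm, .inl rfl, h⟩
  obtain ⟨a, b, hab, hvab, hS⟩ := hpair
  obtain ⟨t, ht⟩ : ∃ t, w.filter q = a :: t := by
    rw [← List.head?_eq_some_iff, ← head?_filter_initialPermutation, hS]
    rfl
  refine ⟨a, b, t, hab, hvab, ht, hS, ?_⟩
  rcases List.filter_tail_eq_filter_or_tail q (initialPermutation w) with h | h <;>
    simp [h, hS]

end InitialPermutation

section Alternation

variable [DecidableEq α] {w : List α} {u v : α}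

theorem alternates_tail_initialPermutation_append_iff (huv : u ≠ v) (hu : u ∈ w)
    (hv : v ∈ w) :
    Alternates u v ((initialPermutation w).tail ++ w) ↔ Alternates u v w := by
  obtain ⟨a, b, t, hab, -, ht, -, hS' | hS'⟩ :=
    exists_filter_initialPermutation_eq_pair huv hu hv <;>
    simp only [alternates_iff, List.filter_append, ht, hS'] <;>
    simp [List.isChain_cons_cons, hab, hab.symm]

theorem alternates_tail_initialPermutation_append_initialPermutation_append_iff (huv : u ≠ v)
    (hu : u ∈ w) (hv : v ∈ w) :
    Alternates u v ((initialPermutation w).tail ++ initialPermutation w ++ w) ↔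
      Alternates u v w := by
  obtain ⟨a, b, t, hab, -, ht, hS, hS' | hS'⟩ :=
    exists_filter_initialPermutation_eq_pair huv hu hv <;>
    simp only [alternates_iff, List.filter_append, ht, hS, hS'] <;>
    simp [List.isChain_cons_cons, hab, hab.symm]

theorem not_alternates_tail_initialPermutation_append_singleton_append (huv : u ≠ v)
    (hu : u ∈ w) (hv : v ∈ w) :
    ¬ Alternates u v ((initialPermutation w).tail ++ [v] ++ w) := by
  obtain ⟨a, b, t, hab, hv, ht, -, hS' | hS'⟩ :=
    exists_filter_initialPermutation_eq_pair huv hu hv <;>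
    rcases hv with rfl | rfl <;>
    simp only [alternates_iff, List.filter_append, ht, hS'] <;>
    simp [List.isChain_cons_cons, hab, hab.symm]

end Alternation

section BoxK2

variable [DecidableEq V]

def boxK2Word (w : List V) : List (V × Fin 2) :=
  (((initialPermutation w).drop 1).flatMap fun u => [(u, 1), (u, 0)]) ++
    ((initialPermutation w).map fun u => (u, 1)) ++ (w.flatMap fun u => [(u, 0), (u, 1)])

theorem filter_boxK2Word_snd_eq_zero (w : List V) :
    (boxK2Word w).filter (fun z => z.2 = 0) = ((initialPermutation w).tail ++ w).map (·, 0) := by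
  simp [boxK2Word, List.filter_flatMap, List.filter_map, ← List.map_eq_flatMap, List.map_tail]

theorem filter_boxK2Word_snd_eq_one (w : List V) :
    (boxK2Word w).filter (fun z => z.2 = 1) =
      ((initialPermutation w).tail ++ initialPermutation w ++ w).map (·, 1) := by
  simp [boxK2Word, List.filter_flatMap, List.filter_map, Function.comp_def,
    ← List.map_eq_flatMap, List.map_tail]

theorem filter_initialPermutation_eq_singleton {w : List V} {u : V} (hu : u ∈ w) :
    (initialPermutation w).filter (· = u) = [u] := by
  rw [List.filter_eq, List.count_eq_one_of_mem (nodup_initialPermutation w)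
    (mem_initialPermutation.2 hu)]
  rfl

theorem filter_boxK2Word_fst_eq {w : List V} {u : V} (hu : u ∈ w) :
    (boxK2Word w).filter (fun z => z.1 = u) =
      ((((initialPermutation w).tail.filter (· = u)).flatMap fun _ => [(1 : Fin 2), 0]) ++
        1 :: (w.filter (· = u)).flatMap fun _ => [0, 1]).map (u, ·) := by
  have hblock (i j : Fin 2) (a : V) : [(a, i), (a, j)].filter (fun z => z.1 = u) =
      if a = u then [(u, i), (u, j)] else [] := by
    by_cases h : a = u <;> simp [h]
  simp only [boxK2Word, List.filter_append, List.filter_flatMap, hblock, List.drop_one]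
  rw [List.flatMap_eq_flatMap_filter fun _ => rfl, List.flatMap_eq_flatMap_filter fun _ => rfl]
  simp [List.filter_map, Function.comp_def, filter_initialPermutation_eq_singleton hu,
    List.map_flatMap]

-- The filter keeps `(v, 1)` and the copies `(a, 0)` with `a ≠ v`.
theorem filter_boxK2Word_cross {w : List V} {v : V} (hv : v ∈ w) :
    (boxK2Word w).filter (fun z => (z.2 = 1 ↔ z.1 = v)) =
      ((initialPermutation w).tail ++ [v] ++ w).map (fun a => (a, if a = v then 1 else 0)) := by
  have hblock (i j : Fin 2) (hij : i ≠ j) (a : V) :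
      [(a, i), (a, j)].filter (fun z => (z.2 = 1 ↔ z.1 = v)) = [(a, if a = v then 1 else 0)] := by
    by_cases h : a = v <;> fin_cases i <;> fin_cases j <;> simp_all
  simp only [boxK2Word, List.filter_append, List.filter_flatMap, List.drop_one,
    hblock 0 1 (by decide), hblock 1 0 (by decide), ← List.map_eq_flatMap]
  simp [List.filter_map, Function.comp_def, filter_initialPermutation_eq_singleton hv]

theorem mem_boxK2Word {w : List V} {z : V × Fin 2} (hz : z.1 ∈ w) : z ∈ boxK2Word w := by
  refine List.mem_append_right _ (List.mem_flatMap.2 ⟨z.1, hz, ?_⟩)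
  obtain ⟨u, i⟩ := z
  fin_cases i <;> simp

variable {w : List V} {u v : V}

theorem alternates_boxK2Word_same_layer_iff (huv : u ≠ v) (hu : u ∈ w) (hv : v ∈ w)
    (i : Fin 2) :
    Alternates (u, i) (v, i) (boxK2Word w) ↔ Alternates u v w := by
  rw [← alternates_filter_iff (p := fun z => z.2 = i) (by simp) (by simp)]
  match i with
  | 0 =>
    rw [filter_boxK2Word_snd_eq_zero, alternates_map_iff (Prod.mk_left_injective _),
      alternates_tail_initialPermutation_append_iff huv hu hv]
  | 1 =>
    rw [filter_boxK2Word_snd_eq_one, alternates_map_iff (Prod.mk_left_injective _),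
      alternates_tail_initialPermutation_append_initialPermutation_append_iff huv hu hv]

theorem alternates_boxK2Word_same_vertex (hu : u ∈ w) :
    Alternates (u, 0) (u, 1) (boxK2Word w) := by
  rw [← alternates_filter_iff (p := fun z => z.1 = u) (by simp) (by simp),
    filter_boxK2Word_fst_eq hu, alternates_map_iff (Prod.mk_right_injective _),
    alternates_zero_one_iff]
  exact List.isChain_ne_flatMap_const_pair_append_cons (by decide) _ _

theorem not_alternates_boxK2Word_cross (huv : u ≠ v) (hu : u ∈ w) (hv : v ∈ w) :
    ¬ Alternates (u, 0) (v, 1) (boxK2Word w) := by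
  set g : V → V × Fin 2 := fun a => (a, if a = v then 1 else 0)
  have hg : Function.Injective g := Function.LeftInverse.injective (g := Prod.fst) fun _ => rfl
  have key := alternates_map_iff hg (x := u) (y := v) ((initialPermutation w).tail ++ [v] ++ w)
  simp only [g, huv, if_true, if_false] at key
  rw [← alternates_filter_iff (p := fun z => (z.2 = 1 ↔ z.1 = v)) (by simp [huv]) (by simp),
    filter_boxK2Word_cross hv, key]
  exact not_alternates_tail_initialPermutation_append_singleton_append huv hu hv

theorem alternates_boxK2Word_iff (hw : ∀ v, v ∈ w) {x y : V × Fin 2} (hxy : x ≠ y) :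
    Alternates x y (boxK2Word w) ↔
      Alternates x.1 y.1 w ∧ x.2 = y.2 ∨ x.2 ≠ y.2 ∧ x.1 = y.1 := by
  obtain ⟨u, i⟩ := x
  obtain ⟨v, j⟩ := y
  by_cases huv : u = v
  · subst huv
    have hij : i ≠ j := fun h => hxy (by rw [h])
    fin_cases i <;> fin_cases j <;> simp at hij ⊢
    · exact alternates_boxK2Word_same_vertex (hw u)
    · exact alternates_comm.1 (alternates_boxK2Word_same_vertex (hw u))
  · by_cases hij : i = j
    · subst hij
      simp [huv, alternates_boxK2Word_same_layer_iff huv (hw u) (hw v)]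
    · fin_cases i <;> fin_cases j <;> simp [huv] at hij ⊢
      · exact not_alternates_boxK2Word_cross huv (hw u) (hw v)
      · exact fun h => not_alternates_boxK2Word_cross (Ne.symm huv) (hw v) (hw u)
          (alternates_comm.1 h)

end BoxK2

theorem stmt10_general [DecidableEq V] (G : SimpleGraph V) (wG : List V)
    (hrep : Represents G wG)
    (us : List V) (hus : wG.reverse.dedup.reverse = us) :
    Represents (G □ (⊤ : SimpleGraph (Fin 2)))
      (((us.drop 1).flatMap fun u => [(u, (1 : Fin 2)), (u, (0 : Fin 2))]) ++
        (us.map fun u => (u, (1 : Fin 2))) ++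
        (wG.flatMap fun u => [(u, (0 : Fin 2)), (u, (1 : Fin 2))])) := by
  subst hus
  show Represents _ (boxK2Word wG)
  refine ⟨fun z => mem_boxK2Word (hrep.1 z.1), fun x y hxy => ?_⟩
  rw [boxProd_adj, top_adj, alternates_boxK2Word_iff hrep.1 hxy]
  by_cases h : x.1 = y.1
  · have h₂ : x.2 ≠ y.2 := fun h₂ => hxy (Prod.ext h h₂)
    simp [h, h₂]
  · simp [h, hrep.2 _ _ h]

theorem stmt10 [Fintype V] [DecidableEq V] (G : SimpleGraph V) (wG : List V)
    (hrep : Represents G wG)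
    (hmin : ∀ w' : List V, Represents G w' → wG.length ≤ w'.length)
    (us : List V) (hus : wG.reverse.dedup.reverse = us) :
    Represents (G □ (⊤ : SimpleGraph (Fin 2)))
      (((us.drop 1).flatMap fun u => [(u, (1 : Fin 2)), (u, (0 : Fin 2))]) ++
        (us.map fun u => (u, (1 : Fin 2))) ++
        (wG.flatMap fun u => [(u, (0 : Fin 2)), (u, (1 : Fin 2))])) :=
  stmt10_general G wG hrep us hus
end
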